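/- For nonnegative matrices A, B, C ∈ ℝ₊^{n×n} with G(A) ⊆ G(B) ⊆ G(C) (as edge sets of their digraphs), a positive vector x satisfies A ≤ X^{-1} B X ≤ C entrywise (where X = diag(x)) if and only if Q ⊗ x ≤ x, where Q = B/C ⊕ Aᵀ/Bᵀ with entrywise division (defining 0/0 = 0) and entrywise maximum ⊕. -/

import Mathlib

open scoped NNReal

/-- Max-times matrix product. -/
noncomputable def maxMul {n : ℕ} (A B : Matrix (Fin n) (Fin n) ℝ≥0) : Matrix (Fin n) (Fin n) ℝ≥0 :=
  fun i j => Finset.univ.sup fun k => A i k * B k j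

/-- Max-times matrix power. -/
noncomputable def maxPow {n : ℕ} (A : Matrix (Fin n) (Fin n) ℝ≥0) : ℕ → Matrix (Fin n) (Fin n) ℝ≥0
  | 0 => fun i j => if i = j then 1 else 0
  | (k+1) => maxMul (maxPow A k) A

/-- Max-times matrix-vector product. -/
noncomputable def maxVec {n : ℕ} (A : Matrix (Fin n) (Fin n) ℝ≥0) (x : Fin n → ℝ≥0) : Fin n → ℝ≥0 :=
  fun i => Finset.univ.sup fun j => A i j * x j

/-- Weight of the cycle visiting `c 0, c 1, ..., c m, c 0` (indices cyclic in `Fin (m+1)`). -/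
noncomputable def cycleWeight {n m : ℕ} (A : Matrix (Fin n) (Fin n) ℝ≥0) (c : Fin (m+1) → Fin n) : ℝ≥0 :=
  ∏ i : Fin (m+1), A (c i) (c (i + 1))

/-- Kleene star `I ⊕ A ⊕ ... ⊕ A^{n-1}`. -/
noncomputable def kleeneStar {n : ℕ} (A : Matrix (Fin n) (Fin n) ℝ≥0) : Matrix (Fin n) (Fin n) ℝ≥0 :=
  fun i j => (Finset.range n).sup fun k => maxPow A k i j

private lemma divMulLe {a b c d : ℝ≥0} (hb : b ≠ 0) :
    a / b * c ≤ d ↔ a * c ≤ d * b := by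
  rw [div_mul_eq_mul_div, div_le_iff₀ (pos_iff_ne_zero.mpr hb)]

private lemma invMulLe {a b c d : ℝ≥0} (hd : d ≠ 0) :
    d⁻¹ * a * b ≤ c ↔ a * b ≤ c * d := by
  rw [mul_assoc, ← div_eq_inv_mul, div_le_iff₀ (pos_iff_ne_zero.mpr hd)]

private lemma leInvMul {a b c d : ℝ≥0} (hd : d ≠ 0) :
    a ≤ d⁻¹ * b * c ↔ a * d ≤ b * c := by
  rw [mul_assoc, ← div_eq_inv_mul, le_div_iff₀ (pos_iff_ne_zero.mpr hd)]

/-- Butkovič–Schneider: `A ≤ X⁻¹BX ≤ C` holds iff `x` is a Fiedler–Pták scaling vector of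
`Q = B/C ⊕ Aᵀ/Bᵀ` (entrywise division with `0/0 = 0`). -/
theorem sandwich_scaling {n : ℕ} (A B C : Matrix (Fin n) (Fin n) ℝ≥0)
    (hAB : ∀ i j, 0 < A i j → 0 < B i j) (hBC : ∀ i j, 0 < B i j → 0 < C i j)
    (x : Fin n → ℝ≥0) (hpos : ∀ i, 0 < x i) :
    (∀ i j, A i j ≤ (x i)⁻¹ * B i j * x j ∧ (x i)⁻¹ * B i j * x j ≤ C i j) ↔
      (∀ i, maxVec (fun i j => max (B i j / C i j) (A j i / B j i)) x i ≤ x i) := by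
  constructor
  · intro h i
    apply Finset.sup_le
    intro j _
    rw [max_mul_of_nonneg _ _ zero_le, max_le_iff]
    constructor
    · rcases eq_or_ne (C i j) 0 with hC | hC
      · have hB : B i j = 0 := by
          by_contra hB
          exact (pos_iff_ne_zero.mp (hBC i j (pos_iff_ne_zero.mpr hB))) hC
        simp [hB]
      · rw [divMulLe hC, mul_comm (x i)]
        have := (h i j).2
        rwa [invMulLe (hpos i).ne'] at this
    · rcases eq_or_ne (B j i) 0 with hB | hB
      · have hA : A j i = 0 := by
          by_contra hA
          exact (pos_iff_ne_zero.mp (hAB j i (pos_iff_ne_zero.mpr hA))) hB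
        simp [hA]
      · rw [divMulLe hB, mul_comm (x i)]
        have := (h j i).1
        rwa [leInvMul (hpos j).ne'] at this
  · intro h i j
    have key : ∀ k l, max (B k l / C k l) (A l k / B l k) * x l ≤ x k := fun k l =>
      le_trans (Finset.le_sup (f := fun j => max (B k j / C k j) (A j k / B j k) * x j)
        (Finset.mem_univ l)) (h k)
    constructor
    · rw [leInvMul (hpos i).ne']
      rcases eq_or_ne (B i j) 0 with hB | hB
      · have hA : A i j = 0 := by
          by_contra hA
          exact (pos_iff_ne_zero.mp (hAB i j (pos_iff_ne_zero.mpr hA))) hB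
        simp [hA]
      · have := le_trans (mul_le_mul_left (le_max_right (B j i / C j i) _) (x i)) (key j i)
        rwa [divMulLe hB, mul_comm (x j)] at this
    · rw [invMulLe (hpos i).ne']
      rcases eq_or_ne (C i j) 0 with hC | hC
      · have hB : B i j = 0 := by
          by_contra hB
          exact (pos_iff_ne_zero.mp (hBC i j (pos_iff_ne_zero.mpr hB))) hC
        simp [hB]
      · have := le_trans (mul_le_mul_left (le_max_left (B i j / C i j) (A j i / B j i)) (x j)) (key i j)
        rwa [divMulLe hC, mul_comm (x i)] at this
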